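/- arXiv:2306.03440 — 3 statements merged into one kernel-verified Lean document; each statement's English description precedes it below -/
import Mathlib

section
/- Let K ≥ 1, N ≥ 2, p > K, and let ℓ : ℝ^K × ℝ^K → ℝ be any function. Fix W ∈ ℝ^{K×p}, b ∈ ℝ^K, regularization parameters λ_W, λ_b ≥ 0, and define the training loss L(W,b,H) = (1/(KN))·∑_{k=1}^K ∑_{i=1}^N ℓ(W h_{k,i} + b, e_k) + (λ_W/2)·‖W‖_F² + (λ_b/2)·‖b‖², where H = (h_{k,i}) is a family of feature vectors in ℝ^p and e_k is the k-th standard basis vector of ℝ^K. Then for every family of features H and every constant C > 0 there exists a family of features H′ = (h′_{k,i}) in ℝ^p such that L(W,b,H′) = L(W,b,H), Σ_B(H′) = Σ_B(H), and ‖Σ_W(H′)‖_F > C. -/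
open Matrix Finset

noncomputable section

/-- The `k`-th class mean `μ_k = (1/N) ∑_i h_{k,i}`. -/
def classMean {K N p : ℕ} (H : Fin K → Fin N → (Fin p → ℝ)) (k : Fin K) : Fin p → ℝ :=
  (N : ℝ)⁻¹ • ∑ i, H k i

/-- The global mean `μ_G = (1/(KN)) ∑_{k,i} h_{k,i}`. -/
def globalMean {K N p : ℕ} (H : Fin K → Fin N → (Fin p → ℝ)) : Fin p → ℝ :=
  ((K : ℝ) * (N : ℝ))⁻¹ • ∑ k, ∑ i, H k i

/-- Within-class covariance `Σ_W = (1/(KN)) ∑_{k,i} (h_{k,i} − μ_k)(h_{k,i} − μ_k)ᵀ`. -/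
def SigmaW {K N p : ℕ} (H : Fin K → Fin N → (Fin p → ℝ)) : Matrix (Fin p) (Fin p) ℝ :=
  ((K : ℝ) * (N : ℝ))⁻¹ •
    ∑ k, ∑ i, vecMulVec (H k i - classMean H k) (H k i - classMean H k)

/-- Between-class covariance `Σ_B = (1/K) ∑_k (μ_k − μ_G)(μ_k − μ_G)ᵀ`. -/
def SigmaB {K N p : ℕ} (H : Fin K → Fin N → (Fin p → ℝ)) : Matrix (Fin p) (Fin p) ℝ :=
  (K : ℝ)⁻¹ • ∑ k, vecMulVec (classMean H k - globalMean H) (classMean H k - globalMean H)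

/-- Overall covariance `Σ_T = (1/(KN)) ∑_{k,i} (h_{k,i} − μ_G)(h_{k,i} − μ_G)ᵀ`. -/
def SigmaT {K N p : ℕ} (H : Fin K → Fin N → (Fin p → ℝ)) : Matrix (Fin p) (Fin p) ℝ :=
  ((K : ℝ) * (N : ℝ))⁻¹ •
    ∑ k, ∑ i, vecMulVec (H k i - globalMean H) (H k i - globalMean H)

/-- Regularized training loss
`L(W,b,H) = (1/(KN)) ∑_{k,i} ℓ(W h_{k,i} + b, e_k) + (λ_W/2)‖W‖_F² + (λ_b/2)‖b‖²`. -/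
def trainLoss {K N p : ℕ} (ℓ : (Fin K → ℝ) × (Fin K → ℝ) → ℝ) (lamW lamb : ℝ)
    (W : Matrix (Fin K) (Fin p) ℝ) (b : Fin K → ℝ)
    (H : Fin K → Fin N → (Fin p → ℝ)) : ℝ :=
  ((K : ℝ) * (N : ℝ))⁻¹ * ∑ k, ∑ i, ℓ (W.mulVec (H k i) + b, Pi.single k 1)
    + lamW / 2 * ∑ k, ∑ j, (W k j) ^ 2 + lamb / 2 * ∑ k, (b k) ^ 2

/-! Since `p > K`, `W` has a kernel vector `v ≠ 0`. Replacing `h_{k,i}` by `h_{k,i} + c_i v` with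
`∑ c_i = 0` keeps every class mean, hence `Σ_B`, and every logit `W h_{k,i} + b`, hence the loss.
Scaling `c` makes a single centred coordinate `h_{k,i,j} − μ_{k,j}` as large as we like, and with
it the diagonal entry `(Σ_W)_{jj}`, which bounds `‖Σ_W‖_F` from below. -/

theorem Matrix.exists_ne_zero_mulVec_eq_zero {m n 𝕜 : Type*} [Fintype m] [Fintype n] [Field 𝕜]
    (W : Matrix m n 𝕜) (h : Fintype.card m < Fintype.card n) : ∃ v ≠ 0, W *ᵥ v = 0 := by
  obtain ⟨v, hv, hv0⟩ :=
    (Submodule.ne_bot_iff _).mp (W.mulVecLin.ker_ne_bot_of_finrank_lt (by simpa using h))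
  exact ⟨v, hv0, hv⟩

theorem exists_sum_eq_zero_apply_eq_one {ι R : Type*} [Fintype ι] [Nontrivial ι] [Ring R] :
    ∃ (c : ι → R) (i₀ : ι), ∑ i, c i = 0 ∧ c i₀ = 1 := by
  classical
  obtain ⟨i₀, i₁, hne⟩ := exists_pair_ne ι
  exact ⟨Pi.single i₀ 1 - Pi.single i₁ 1, i₀, by simp [sum_sub_distrib], by simp [hne]⟩

section Perturbation

variable {K N p : ℕ} (H D : Fin K → Fin N → Fin p → ℝ)

theorem classMean_add_of_sum_eq_zero (hD : ∀ k, ∑ i, D k i = 0) :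
    classMean (H + D) = classMean H := by
  funext k
  simp [classMean, sum_add_distrib, hD]

theorem globalMean_add_of_sum_eq_zero (hD : ∀ k, ∑ i, D k i = 0) :
    globalMean (H + D) = globalMean H := by
  simp [globalMean, sum_add_distrib, hD]

theorem SigmaB_add_of_sum_eq_zero (hD : ∀ k, ∑ i, D k i = 0) : SigmaB (H + D) = SigmaB H := by
  simp only [SigmaB, classMean_add_of_sum_eq_zero H D hD, globalMean_add_of_sum_eq_zero H D hD]

theorem trainLoss_add_of_mulVec_eq_zero (ℓ : (Fin K → ℝ) × (Fin K → ℝ) → ℝ) (lamW lamb : ℝ)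
    (W : Matrix (Fin K) (Fin p) ℝ) (b : Fin K → ℝ) (hD : ∀ k i, W *ᵥ D k i = 0) :
    trainLoss ℓ lamW lamb W b (H + D) = trainLoss ℓ lamW lamb W b H := by
  simp [trainLoss, mulVec_add, hD]

end Perturbation

theorem SigmaW_apply_self {K N p : ℕ} (H : Fin K → Fin N → Fin p → ℝ) (j : Fin p) :
    SigmaW H j j = ((K : ℝ) * N)⁻¹ * ∑ k, ∑ i, (H k i j - classMean H k j) ^ 2 := by
  simp [SigmaW, Matrix.sum_apply, vecMulVec_apply, sq]

theorem inv_mul_sq_sub_classMean_le_SigmaW {K N p : ℕ} (H : Fin K → Fin N → Fin p → ℝ)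
    (k : Fin K) (i : Fin N) (j : Fin p) :
    ((K : ℝ) * N)⁻¹ * (H k i j - classMean H k j) ^ 2 ≤ SigmaW H j j := by
  rw [SigmaW_apply_self]
  gcongr
  calc (H k i j - classMean H k j) ^ 2 ≤ ∑ i, (H k i j - classMean H k j) ^ 2 :=
        single_le_sum (f := fun i ↦ (H k i j - classMean H k j) ^ 2)
          (fun _ _ ↦ sq_nonneg _) (mem_univ i)
    _ ≤ ∑ k, ∑ i, (H k i j - classMean H k j) ^ 2 :=
        single_le_sum (f := fun k ↦ ∑ i, (H k i j - classMean H k j) ^ 2)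
          (fun _ _ ↦ sum_nonneg fun _ _ ↦ sq_nonneg _) (mem_univ k)

theorem Matrix.abs_apply_le_sqrt_sum_sq {m n : Type*} [Fintype m] [Fintype n]
    (A : Matrix m n ℝ) (i : m) (j : n) : |A i j| ≤ √(∑ i, ∑ j, A i j ^ 2) := by
  refine Real.abs_le_sqrt ?_
  calc A i j ^ 2 ≤ ∑ j, A i j ^ 2 := single_le_sum (fun _ _ ↦ sq_nonneg _) (mem_univ j)
    _ ≤ ∑ i, ∑ j, A i j ^ 2 :=
        single_le_sum (f := fun i ↦ ∑ j, A i j ^ 2)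
          (fun _ _ ↦ sum_nonneg fun _ _ ↦ sq_nonneg _) (mem_univ i)

theorem exists_same_loss_large_within_class_covariance_general
    {K N p : ℕ} (hK : 1 ≤ K) (hN : 2 ≤ N) (hp : K < p)
    (ℓ : (Fin K → ℝ) × (Fin K → ℝ) → ℝ)
    (W : Matrix (Fin K) (Fin p) ℝ) (b : Fin K → ℝ)
    (lamW lamb : ℝ)
    (H : Fin K → Fin N → (Fin p → ℝ)) (C : ℝ) :
    ∃ H' : Fin K → Fin N → (Fin p → ℝ),
      trainLoss ℓ lamW lamb W b H' = trainLoss ℓ lamW lamb W b H ∧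
      SigmaB H' = SigmaB H ∧
      C < Real.sqrt (∑ i, ∑ j, (SigmaW H' i j) ^ 2) := by
  obtain ⟨v, hv, hWv⟩ := W.exists_ne_zero_mulVec_eq_zero (by simpa using hp)
  obtain ⟨j, hj⟩ : ∃ j, v j ≠ 0 := Function.ne_iff.mp hv
  have : Nontrivial (Fin N) := Fin.nontrivial_iff_two_le.mpr hN
  obtain ⟨c, i₀, hc, hci₀⟩ := exists_sum_eq_zero_apply_eq_one (ι := Fin N) (R := ℝ)
  have hKN : (0 : ℝ) < K * N := by
    have : 0 < N := by omega
    positivity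
  let k₀ : Fin K := ⟨0, hK⟩
  let M := √(K * N * (|C| + 1))
  let t := (M - (H k₀ i₀ j - classMean H k₀ j)) / v j
  let D : Fin K → Fin N → Fin p → ℝ := fun _ i ↦ (c i * t) • v
  have hD : ∀ k, ∑ i, D k i = 0 := fun _ ↦ by simp [D, ← sum_smul, ← sum_mul, hc]
  have hdev : (H + D) k₀ i₀ j - classMean (H + D) k₀ j = M := by
    rw [classMean_add_of_sum_eq_zero H D hD]
    simp only [Pi.add_apply, Pi.smul_apply, smul_eq_mul, D, hci₀, one_mul, t]
    field_simp
    ring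
  refine ⟨H + D, trainLoss_add_of_mulVec_eq_zero H D ℓ lamW lamb W b
    (fun _ _ ↦ by simp [D, mulVec_smul, hWv]), SigmaB_add_of_sum_eq_zero H D hD, ?_⟩
  calc C < |C| + 1 := (le_abs_self C).trans_lt (lt_add_one _)
    _ = ((K : ℝ) * N)⁻¹ * M ^ 2 := by
        rw [Real.sq_sqrt (by positivity)]
        field_simp
    _ ≤ SigmaW (H + D) j j := hdev ▸ inv_mul_sq_sub_classMean_le_SigmaW (H + D) k₀ i₀ j
    _ ≤ |SigmaW (H + D) j j| := le_abs_self _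
    _ ≤ √(∑ i, ∑ j, SigmaW (H + D) i j ^ 2) := (SigmaW (H + D)).abs_apply_le_sqrt_sum_sq j j

/-- **Proposition 1 (full collapse is not necessary for loss minimization).**
For `K ≥ 1`, `N ≥ 2`, `p > K`, any loss `ℓ`, any fixed `W, b`, any regularization
parameters `λ_W, λ_b ≥ 0`, any features `H` and any `C > 0`, there are features `H'` with the
same training loss and the same between-class covariance, but with `‖Σ_W(H')‖_F > C`. -/
theorem exists_same_loss_large_within_class_covariance
    {K N p : ℕ} (hK : 1 ≤ K) (hN : 2 ≤ N) (hp : K < p)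
    (ℓ : (Fin K → ℝ) × (Fin K → ℝ) → ℝ)
    (W : Matrix (Fin K) (Fin p) ℝ) (b : Fin K → ℝ)
    (lamW lamb : ℝ) (hlamW : 0 ≤ lamW) (hlamb : 0 ≤ lamb)
    (H : Fin K → Fin N → (Fin p → ℝ)) (C : ℝ) (hC : 0 < C) :
    ∃ H' : Fin K → Fin N → (Fin p → ℝ),
      trainLoss ℓ lamW lamb W b H' = trainLoss ℓ lamW lamb W b H ∧
      SigmaB H' = SigmaB H ∧
      C < Real.sqrt (∑ i, ∑ j, (SigmaW H' i j) ^ 2) :=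
  exists_same_loss_large_within_class_covariance_general hK hN hp ℓ W b lamW lamb H C
end
end

section
/- Let A and B be real symmetric positive semidefinite p×p matrices such that B − A is positive semidefinite. Then Tr[B† A] ≤ rank(A). -/
open Matrix

noncomputable section

/-- `Ad` is the Moore–Penrose pseudoinverse of `A`: the four Penrose conditions. -/
def IsMoorePenrose {p : ℕ} (A Ad : Matrix (Fin p) (Fin p) ℝ) : Prop :=
  A * Ad * A = A ∧ Ad * A * Ad = Ad ∧ (A * Ad)ᵀ = A * Ad ∧ (Ad * A)ᵀ = Ad * A

/-!
`B†` is symmetric (by uniqueness of the pseudoinverse) and positive semidefinite, so it has a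
square root `S`, and `Tr[B† A] = Tr[S A S]`. In the Loewner order `0 ≤ S A S ≤ S B S`, and
`S B S` is an orthogonal projection because `B B† B = B`; hence the eigenvalues of `S A S` lie
in `[0, 1]`, its trace is at most its rank, and `rank (S A S) ≤ rank A`.
-/

open scoped MatrixOrder

namespace IsMoorePenrose

variable {p : ℕ} {A X Y : Matrix (Fin p) (Fin p) ℝ}

theorem unique (hX : IsMoorePenrose A X) (hY : IsMoorePenrose A Y) : X = Y := by
  obtain ⟨hX1, hX2, hX3, hX4⟩ := hX
  obtain ⟨hY1, hY2, hY3, hY4⟩ := hY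
  have hAX : A * X = A * Y := by
    calc A * X = (A * Y * A * X)ᵀ := by rw [hY1, hX3]
      _ = (A * X)ᵀ * (A * Y)ᵀ := by simp only [transpose_mul, mul_assoc]
      _ = A * Y := by rw [hX3, hY3, ← mul_assoc, hX1]
  have hXA : X * A = Y * A := by
    calc X * A = (X * (A * Y * A))ᵀ := by rw [hY1, hX4]
      _ = (Y * A)ᵀ * (X * A)ᵀ := by simp only [transpose_mul, mul_assoc]
      _ = Y * A := by rw [hX4, hY4, mul_assoc, ← mul_assoc A, hX1]
  calc X = X * A * X := hX2.symm
    _ = Y * A * Y := by rw [mul_assoc, hAX, ← mul_assoc, hXA]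
    _ = Y := hY2

theorem transpose (h : IsMoorePenrose A X) : IsMoorePenrose Aᵀ Xᵀ := by
  obtain ⟨h1, h2, h3, h4⟩ := h
  refine ⟨?_, ?_, ?_, ?_⟩
  · rw [← transpose_mul, ← transpose_mul, ← mul_assoc, h1]
  · rw [← transpose_mul, ← transpose_mul, ← mul_assoc, h2]
  · rw [← transpose_mul, h4, h4]
  · rw [← transpose_mul, h3, h3]

theorem transpose_eq_self (h : IsMoorePenrose A X) (hA : Aᵀ = A) : Xᵀ = X :=
  (hA ▸ h.transpose).unique h

theorem posSemidef (h : IsMoorePenrose A X) (hA : A.PosSemidef) : X.PosSemidef := by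
  have hX : Xᴴ = X := by
    rw [conjTranspose_eq_transpose_of_trivial]
    exact h.transpose_eq_self (by simpa using hA.isHermitian.eq)
  have hXAX := hA.conjTranspose_mul_mul_same X
  rwa [hX, h.2.1] at hXAX

theorem isStarProjection_conj (h : IsMoorePenrose A X) (hA : IsSelfAdjoint A)
    {S : Matrix (Fin p) (Fin p) ℝ} (hS : IsSelfAdjoint S) (hSS : S * S = X) :
    IsStarProjection (S * A * S) where
  isIdempotentElem := by
    calc S * A * S * (S * A * S) = S * (A * (S * S) * A) * S := by simp only [mul_assoc]
      _ = S * A * S := by rw [hSS, h.1]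
  isSelfAdjoint := by
    simp [IsSelfAdjoint, star_mul, hA.star_eq, hS.star_eq, mul_assoc]

end IsMoorePenrose

open scoped ComplexOrder in
theorem Matrix.re_trace_le_rank_of_nonneg_of_le_one {n 𝕜 : Type*} [Fintype n] [DecidableEq n]
    [RCLike 𝕜] {M : Matrix n n 𝕜} (h0 : 0 ≤ M) (h1 : M ≤ 1) :
    RCLike.re M.trace ≤ M.rank := by
  have hM := h0.posSemidef.isHermitian
  have hle : ∀ i, hM.eigenvalues i ≤ 1 := fun i ↦
    (le_algebraMap_iff_spectrum_le (r := (1 : ℝ)) hM.isSelfAdjoint).mp (by simpa using h1) _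
      (hM.spectrum_real_eq_range_eigenvalues ▸ ⟨i, rfl⟩)
  calc RCLike.re M.trace = ∑ i, hM.eigenvalues i := by simp [hM.trace_eq_sum_eigenvalues]
    _ = ∑ i with hM.eigenvalues i ≠ 0, hM.eigenvalues i := (Finset.sum_filter_ne_zero _).symm
    _ ≤ (Finset.univ.filter (hM.eigenvalues · ≠ 0)).card • (1 : ℝ) :=
        Finset.sum_le_card_nsmul _ _ _ fun i _ ↦ hle i
    _ = M.rank := by simp [hM.rank_eq_card_non_zero_eigs, Fintype.card_subtype]

/-- If `A`, `B` are real symmetric PSD matrices with `B − A` PSD, then `Tr[B† A] ≤ rank A`. -/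
theorem trace_pinv_mul_le_rank {p : ℕ} (A B : Matrix (Fin p) (Fin p) ℝ)
    (hA : A.PosSemidef) (hB : B.PosSemidef) (hBA : (B - A).PosSemidef)
    (Bd : Matrix (Fin p) (Fin p) ℝ) (hBd : IsMoorePenrose B Bd) :
    (Bd * A).trace ≤ (A.rank : ℝ) := by
  set S := CFC.sqrt Bd
  have hS : 0 ≤ S := CFC.sqrt_nonneg Bd
  have hSS : S * S = Bd := CFC.sqrt_mul_sqrt_self Bd (hBd.posSemidef hB).nonneg
  have hM0 : 0 ≤ S * A * S := conjugate_nonneg_of_nonneg hA.nonneg hS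
  have hM1 : S * A * S ≤ 1 :=
    calc S * A * S ≤ S * B * S := conjugate_le_conjugate_of_nonneg (le_iff.mpr hBA) hS
      _ ≤ 1 :=
        (hBd.isStarProjection_conj hB.isHermitian.isSelfAdjoint hS.isSelfAdjoint hSS).le_one
  calc (Bd * A).trace = (S * A * S).trace := by rw [← hSS, mul_assoc, trace_mul_comm]
    _ ≤ (S * A * S).rank := re_trace_le_rank_of_nonneg_of_le_one hM0 hM1
    _ ≤ A.rank := by exact_mod_cast (rank_mul_le_left _ _).trans (rank_mul_le_right _ _)
end
end

section
/- Let K ≥ 1, N ≥ 1 and let h_{k,i} ∈ ℝ^p for k = 1,…,K and i = 1,…,N be feature vectors, and let U ∈ ℝ^{p×p} be an invertible matrix. Let H′ = (U h_{k,i}) denote the transformed features. Then Tr[Σ_T(H′)† Σ_B(H′)] = Tr[Σ_T(H)† Σ_B(H)] and rank(Σ_B(H′)) = rank(Σ_B(H)); consequently, if rank(Σ_B(H)) > 0, the Variability Collapse Index VCI = 1 − Tr[Σ_T† Σ_B]/rank(Σ_B) is the same for H and H′. -/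
open Matrix Finset

noncomputable section

/-!
Both covariances transform by congruence, `Σ(U H) = U Σ(H) Uᵀ`, which settles the ranks. For the
trace, only the first Penrose equation `A X A = A` matters: congruence carries such a generalized
inverse `X` of `A` to the generalized inverse `U⁻ᵀ X U⁻¹` of `U A Uᵀ`, leaving `Tr[X B]` unchanged,
so it suffices that `Tr[X Σ_B]` is the same for every generalized inverse `X` of `Σ_T`. This holds
because `ker Σ_T ⊆ ker Σ_B`: if `xᵀ Σ_T x = 0`, every centred feature is orthogonal to `x`, hence
so is every centred class mean. For symmetric `A`, `B` with `ker A ⊆ ker B` this kernel inclusion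
gives `B X A = B = A Y B` for any two generalized inverses `X`, `Y` of `A`, and then
`Tr[Y B] = Tr[Y B X A] = Tr[A Y B X] = Tr[X B]`.
-/

namespace Matrix

variable {l m n R : Type*} [CommRing R]

theorem mul_mul_eq_of_ker_le [Fintype m] [Fintype n] {A : Matrix m n R} {B : Matrix l n R}
    {X : Matrix n m R} (hker : ∀ v, A *ᵥ v = 0 → B *ᵥ v = 0) (hX : A * X * A = A) :
    B * X * A = B := by
  refine ext_iff_mulVec.mpr fun v => ?_
  have hA : A *ᵥ (v - (X * A) *ᵥ v) = 0 := by
    rw [mulVec_sub, mulVec_mulVec, ← Matrix.mul_assoc, hX, sub_self]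
  have hB := hker _ hA
  rwa [mulVec_sub, mulVec_mulVec, sub_eq_zero, eq_comm, ← Matrix.mul_assoc] at hB

theorem trace_mul_eq_of_ker_le [Fintype m] [Fintype n] {A B : Matrix m n R} {X Y : Matrix n m R}
    (hker : ∀ v, A *ᵥ v = 0 → B *ᵥ v = 0) (hkerT : ∀ v, Aᵀ *ᵥ v = 0 → Bᵀ *ᵥ v = 0)
    (hX : A * X * A = A) (hY : A * Y * A = A) : (Y * B).trace = (X * B).trace := by
  have hBXA : B * X * A = B := mul_mul_eq_of_ker_le hker hX
  have hAYB : A * Y * B = B := by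
    have hYT : Aᵀ * Yᵀ * Aᵀ = Aᵀ := by
      rw [← transpose_mul, ← transpose_mul, ← Matrix.mul_assoc, hY]
    simpa only [transpose_mul, transpose_transpose, Matrix.mul_assoc] using
      congrArg transpose (mul_mul_eq_of_ker_le hkerT hYT)
  calc (Y * B).trace = (Y * B * X * A).trace := by
        rw [Matrix.mul_assoc Y, Matrix.mul_assoc Y, hBXA]
    _ = (A * Y * B * X).trace := by rw [trace_mul_comm]; simp only [Matrix.mul_assoc]
    _ = (X * B).trace := by rw [hAYB, trace_mul_comm]

theorem conj_mul_inv_conj_mul_conj [Fintype n] [DecidableEq n] {A X U V : Matrix n n R}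
    (hU : IsUnit U.det) (hV : IsUnit V.det) (hX : A * X * A = A) :
    (U * A * V) * (V⁻¹ * X * U⁻¹) * (U * A * V) = U * A * V := by
  calc (U * A * V) * (V⁻¹ * X * U⁻¹) * (U * A * V)
      = U * A * (V * V⁻¹) * X * (U⁻¹ * U) * A * V := by simp only [Matrix.mul_assoc]
    _ = U * (A * X * A) * V := by
      rw [mul_nonsing_inv V hV, nonsing_inv_mul U hU]
      simp only [Matrix.mul_one, Matrix.mul_assoc]
    _ = U * A * V := by rw [hX]

theorem trace_inv_conj_mul_conj [Fintype n] [DecidableEq n] {B X U V : Matrix n n R}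
    (hU : IsUnit U.det) (hV : IsUnit V.det) :
    ((V⁻¹ * X * U⁻¹) * (U * B * V)).trace = (X * B).trace := by
  calc ((V⁻¹ * X * U⁻¹) * (U * B * V)).trace = (V⁻¹ * (X * (U⁻¹ * U) * B * V)).trace := by
        simp only [Matrix.mul_assoc]
    _ = (X * B * (V * V⁻¹)).trace := by
        rw [nonsing_inv_mul U hU, trace_mul_comm]
        simp only [Matrix.mul_one, Matrix.mul_assoc]
    _ = (X * B).trace := by rw [mul_nonsing_inv V hV, Matrix.mul_one]

theorem vecMulVec_mulVec_mulVec [Fintype m] (U : Matrix n m R) (v w : m → R) :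
    vecMulVec (U *ᵥ v) (U *ᵥ w) = U * vecMulVec v w * Uᵀ := by
  rw [mul_vecMulVec, vecMulVec_mul, vecMul_transpose]

end Matrix

section Features

variable {K N p q : ℕ} (H : Fin K → Fin N → Fin p → ℝ)

theorem classMean_map (U : Matrix (Fin q) (Fin p) ℝ) (k : Fin K) :
    classMean (fun k i => U *ᵥ H k i) k = U *ᵥ classMean H k := by
  simp only [classMean, mulVec_smul, mulVec_sum]

theorem globalMean_map (U : Matrix (Fin q) (Fin p) ℝ) :
    globalMean (fun k i => U *ᵥ H k i) = U *ᵥ globalMean H := by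
  simp only [globalMean, mulVec_smul, mulVec_sum]

theorem SigmaB_map (U : Matrix (Fin q) (Fin p) ℝ) :
    SigmaB (fun k i => U *ᵥ H k i) = U * SigmaB H * Uᵀ := by
  simp only [SigmaB, classMean_map, globalMean_map, ← mulVec_sub, vecMulVec_mulVec_mulVec,
    Matrix.smul_mul, Matrix.mul_smul, Matrix.mul_sum, Matrix.sum_mul]

theorem SigmaT_map (U : Matrix (Fin q) (Fin p) ℝ) :
    SigmaT (fun k i => U *ᵥ H k i) = U * SigmaT H * Uᵀ := by
  simp only [SigmaT, globalMean_map, ← mulVec_sub, vecMulVec_mulVec_mulVec,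
    Matrix.smul_mul, Matrix.mul_smul, Matrix.mul_sum, Matrix.sum_mul]

theorem transpose_SigmaB : (SigmaB H)ᵀ = SigmaB H := by
  simp only [SigmaB, transpose_smul, transpose_sum, transpose_vecMulVec]

theorem transpose_SigmaT : (SigmaT H)ᵀ = SigmaT H := by
  simp only [SigmaT, transpose_smul, transpose_sum, transpose_vecMulVec]

theorem SigmaB_mulVec_eq_zero_of_SigmaT_mulVec_eq_zero {x : Fin p → ℝ}
    (hx : SigmaT H *ᵥ x = 0) : SigmaB H *ᵥ x = 0 := by
  rcases Nat.eq_zero_or_pos K with rfl | hK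
  · simp [SigmaB]
  rcases Nat.eq_zero_or_pos N with rfl | hN
  · simp [SigmaB, classMean, globalMean]
  have hquad : x ⬝ᵥ SigmaT H *ᵥ x
      = ((K : ℝ) * N)⁻¹ * ∑ k, ∑ i, ((H k i - globalMean H) ⬝ᵥ x) ^ 2 := by
    rw [dotProduct_comm]
    simp only [SigmaT, smul_mulVec, sum_mulVec, vecMulVec_mulVec, op_smul_eq_smul,
      smul_dotProduct, sum_dotProduct, smul_eq_mul, sq]
  have hdev : ∀ k i, (H k i - globalMean H) ⬝ᵥ x = 0 := by
    have hsum : ∑ k, ∑ i, ((H k i - globalMean H) ⬝ᵥ x) ^ 2 = 0 := by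
      rw [hx, dotProduct_zero, eq_comm] at hquad
      simpa [hK.ne', hN.ne'] using hquad
    intro k i
    have hk := (sum_eq_zero_iff_of_nonneg fun k _ => by positivity).mp hsum k (mem_univ k)
    have hki := (sum_eq_zero_iff_of_nonneg fun i _ => by positivity).mp hk i (mem_univ i)
    exact pow_eq_zero_iff two_ne_zero |>.mp hki
  have hclass : ∀ k, (classMean H k - globalMean H) ⬝ᵥ x = 0 := by
    intro k
    have hμ : classMean H k - globalMean H = (N : ℝ)⁻¹ • ∑ i, (H k i - globalMean H) := by
      rw [classMean, sum_sub_distrib, sum_const, card_univ, Fintype.card_fin, smul_sub,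
        ← Nat.cast_smul_eq_nsmul ℝ, smul_smul, inv_mul_cancel₀ (by positivity), one_smul]
    simp only [hμ, smul_dotProduct, sum_dotProduct, hdev, sum_const_zero, smul_zero]
  simp only [SigmaB, smul_mulVec, sum_mulVec, vecMulVec_mulVec, hclass, MulOpposite.op_zero,
    zero_smul, sum_const_zero, smul_zero]

end Features

theorem vci_invariant_general {K N p : ℕ}
    (H : Fin K → Fin N → (Fin p → ℝ))
    (U : Matrix (Fin p) (Fin p) ℝ) (hU : IsUnit U.det)
    (H' : Fin K → Fin N → (Fin p → ℝ)) (hH' : ∀ k i, H' k i = U.mulVec (H k i))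
    (STd STd' : Matrix (Fin p) (Fin p) ℝ)
    (hSTd : IsMoorePenrose (SigmaT H) STd) (hSTd' : IsMoorePenrose (SigmaT H') STd') :
    (STd' * SigmaB H').trace = (STd * SigmaB H).trace ∧
    (SigmaB H').rank = (SigmaB H).rank ∧
    (0 < (SigmaB H).rank →
      1 - (STd' * SigmaB H').trace / ((SigmaB H').rank : ℝ)
        = 1 - (STd * SigmaB H).trace / ((SigmaB H).rank : ℝ)) := by
  have hH'_eq : H' = fun k i => U *ᵥ H k i := funext fun k => funext (hH' k)
  have hT' : SigmaT H' = U * SigmaT H * Uᵀ := by rw [hH'_eq, SigmaT_map]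
  have hB' : SigmaB H' = U * SigmaB H * Uᵀ := by rw [hH'_eq, SigmaB_map]
  have hUT : IsUnit Uᵀ.det := by rwa [det_transpose]
  have hker : ∀ x, SigmaT H' *ᵥ x = 0 → SigmaB H' *ᵥ x = 0 :=
    fun _ => SigmaB_mulVec_eq_zero_of_SigmaT_mulVec_eq_zero H'
  have htrace : (STd' * SigmaB H').trace = (STd * SigmaB H).trace :=
    calc (STd' * SigmaB H').trace = (Uᵀ⁻¹ * STd * U⁻¹ * SigmaB H').trace :=
          trace_mul_eq_of_ker_le hker (by simpa only [transpose_SigmaT, transpose_SigmaB])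
            (by rw [hT']; exact conj_mul_inv_conj_mul_conj hU hUT hSTd.1) hSTd'.1
      _ = (STd * SigmaB H).trace := by rw [hB']; exact trace_inv_conj_mul_conj hU hUT
  have hrank : (SigmaB H').rank = (SigmaB H).rank := by
    rw [hB', rank_mul_eq_left_of_isUnit_det _ _ hUT, rank_mul_eq_right_of_isUnit_det _ _ hU]
  exact ⟨htrace, hrank, fun _ => by rw [htrace, hrank]⟩

/-- **Corollary (invariance of VCI).** For an invertible `U ∈ ℝ^{p×p}` and transformed
features `h'_{k,i} = U h_{k,i}`, one has `Tr[Σ_T(H')† Σ_B(H')] = Tr[Σ_T(H)† Σ_B(H)]` and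
`rank Σ_B(H') = rank Σ_B(H)`; hence, if `rank Σ_B(H) > 0`, the Variability Collapse Index
`VCI = 1 − Tr[Σ_T† Σ_B]/rank(Σ_B)` agrees on `H` and `H'`. -/
theorem vci_invariant {K N p : ℕ} (hK : 1 ≤ K) (hN : 1 ≤ N)
    (H : Fin K → Fin N → (Fin p → ℝ))
    (U : Matrix (Fin p) (Fin p) ℝ) (hU : IsUnit U.det)
    (H' : Fin K → Fin N → (Fin p → ℝ)) (hH' : ∀ k i, H' k i = U.mulVec (H k i))
    (STd STd' : Matrix (Fin p) (Fin p) ℝ)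
    (hSTd : IsMoorePenrose (SigmaT H) STd) (hSTd' : IsMoorePenrose (SigmaT H') STd') :
    (STd' * SigmaB H').trace = (STd * SigmaB H).trace ∧
    (SigmaB H').rank = (SigmaB H).rank ∧
    (0 < (SigmaB H).rank →
      1 - (STd' * SigmaB H').trace / ((SigmaB H').rank : ℝ)
        = 1 - (STd * SigmaB H).trace / ((SigmaB H).rank : ℝ)) :=
  vci_invariant_general H U hU H' hH' STd STd' hSTd hSTd'
end
end
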